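/- There exists a constant C such that for every k ≥ C, every 2-colouring of the pairs from {0,...,k^{4·⌈log₂ k⌉}−1} that is at most k-unstable has a homogeneous set of cardinality k. -/

import Mathlib

/-- Number of indices where consecutive entries of a boolean sequence differ. -/
def changes (s : List Bool) : ℕ :=
  ((s.zip s.tail).filter fun p => p.1 != p.2).length

/-- Number of maximal constant blocks of a boolean sequence. -/
def blocks (s : List Bool) : ℕ :=
  if s = [] then 0 else changes s + 1

/-- The sequence ⟨f x y : y ∈ A, y > x⟩ in increasing order of y. -/
def seqAfter (f : ℕ → ℕ → Bool) (A : Finset ℕ) (x : ℕ) : List Bool :=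
  (Finset.sort (A.filter fun y => x < y) (· ≤ ·)).map (f x)

/-- `f` is at most `k`-unstable on `A`: each sequence f(x,−) has at most k maximal constant blocks. -/
def AtMostUnstable (f : ℕ → ℕ → Bool) (A : Finset ℕ) (k : ℕ) : Prop :=
  ∀ x ∈ A, blocks (seqAfter f A x) ≤ k

/-- `H` is homogeneous for `f` with colour `b`. -/
def HomogOf (f : ℕ → ℕ → Bool) (H : Finset ℕ) (b : Bool) : Prop :=
  ∀ x ∈ H, ∀ y ∈ H, x < y → f x y = b

/-- `H` is homogeneous for `f`. -/
def Homogeneous (f : ℕ → ℕ → Bool) (H : Finset ℕ) : Prop :=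
  ∃ b, HomogOf f H b

/-- Very simple colourings (Erdős–Hajnal), as a predicate on (finite set, colouring). -/
inductive VerySimple : Finset ℕ → (ℕ → ℕ → Bool) → Prop
  | single (a : ℕ) (f : ℕ → ℕ → Bool) : VerySimple {a} f
  | join (S₁ S₂ : Finset ℕ) (f : ℕ → ℕ → Bool) (b : Bool)
      (hd : Disjoint S₁ S₂)
      (h₁ : VerySimple S₁ f) (h₂ : VerySimple S₂ f)
      (hcross : ∀ x ∈ S₁, ∀ y ∈ S₂, (x < y → f x y = b) ∧ (y < x → f y x = b)) :
      VerySimple (S₁ ∪ S₂) f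

/-- The list `s` contains a run of `k+1` equal consecutive entries. -/
def hasRunL (k : ℕ) (s : List Bool) : Prop :=
  ∃ i, i + k < s.length ∧
    ∀ a b, i ≤ a → a ≤ i + k → i ≤ b → b ≤ i + k → s.getD a false = s.getD b false

/-- The least level `e ≤ t` at which `x` and `y` lie in the same interval of length `s^e`. -/
def splitLevel (s t x y : ℕ) : ℕ :=
  (((List.range (t + 1)).find? fun e => x / s ^ e == y / s ^ e).getD t)

/-- The hierarchical colouring of `[s^t]` built from a base colouring `g` on `[s]`. -/
def hierColor (s t : ℕ) (g : ℕ → ℕ → Bool) (x y : ℕ) : Bool :=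
  g ((x / s ^ (splitLevel s t x y - 1)) % s) ((y / s ^ (splitLevel s t x y - 1)) % s)

lemma changes_nil : changes [] = 0 := rfl
lemma changes_single (a : Bool) : changes [a] = 0 := rfl
lemma changes_cons_cons (a b : Bool) (t : List Bool) :
    changes (a :: b :: t) = (if a = b then 0 else 1) + changes (b :: t) := by
  simp only [changes, List.zip, List.tail, List.zipWith, List.filter]
  cases h : (a != b) <;> simp_all [Nat.add_comm]

lemma changes_le_cons (a : Bool) (t : List Bool) : changes t ≤ changes (a :: t) := by
  cases t with
  | nil => simp [changes_nil]
  | cons b s => rw [changes_cons_cons]; omega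

lemma changes_cons_le_cons_cons (a b : Bool) (t : List Bool) :
    changes (a :: t) ≤ changes (a :: b :: t) := by
  cases t with
  | nil => simp [changes_single]
  | cons c s =>
    rw [changes_cons_cons, changes_cons_cons, changes_cons_cons]
    cases a <;> cases b <;> cases c <;> simp <;> omega

lemma changes_sublist_aux {s' s : List Bool} (h : List.Sublist s' s) :
    changes s' ≤ changes s ∧ ∀ a, changes (a :: s') ≤ changes (a :: s) := by
  induction h with
  | slnil => exact ⟨le_refl _, fun a => le_refl _⟩
  | @cons s' s b h ih =>
    refine ⟨ih.1.trans (changes_le_cons b s), fun a => (ih.2 a).trans ?_⟩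
    exact changes_cons_le_cons_cons a b s
  | @cons_cons s' s a h ih =>
    refine ⟨ih.2 a, fun c => ?_⟩
    rw [changes_cons_cons, changes_cons_cons]
    exact Nat.add_le_add_left (ih.2 a) _

lemma changes_sublist {s' s : List Bool} (h : List.Sublist s' s) : changes s' ≤ changes s :=
  (changes_sublist_aux h).1

lemma changes_append (s t : List Bool) : changes s + changes t ≤ changes (s ++ t) := by
  induction s with
  | nil => simp [changes_nil]
  | cons a s ih =>
    cases s with
    | nil => simpa [changes_single] using changes_le_cons a t
    | cons b s' =>
      have h1 : changes ((a :: b :: s') ++ t) = (if a = b then 0 else 1) + changes ((b :: s') ++ t) := by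
        simpa using changes_cons_cons a b (s' ++ t)
      rw [h1, changes_cons_cons]
      omega

lemma changes_zero_aux : ∀ (s : List Bool) (x : Bool), changes (x :: s) = 0 → ∀ a ∈ s, a = x := by
  intro s
  induction s with
  | nil => simp
  | cons y t ih =>
    intro x h a ha
    rw [changes_cons_cons] at h
    have hxy : x = y := by by_contra hne; simp [hne] at h
    have h2 : changes (y :: t) = 0 := by omega
    rcases List.mem_cons.mp ha with rfl | ha'
    · exact hxy.symm
    · rw [ih y h2 a ha', hxy]

lemma const_of_changes_zero {s : List Bool} (h : changes s = 0) :
    ∀ a ∈ s, ∀ b ∈ s, a = b := by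
  cases s with
  | nil => simp
  | cons x t =>
    intro a ha b hb
    have hx : ∀ c ∈ x :: t, c = x := by
      intro c hc
      rcases List.mem_cons.mp hc with rfl | hc'
      · rfl
      · exact changes_zero_aux t x h c hc'
    rw [hx a ha, hx b hb]

lemma blocks_mono {s' s : List Bool} (h : List.Sublist s' s) : blocks s' ≤ blocks s := by
  rcases eq_or_ne s' [] with rfl | h'
  · simp [blocks]
  · have hs : s ≠ [] := by rintro rfl; exact h' (List.sublist_nil.mp h)
    simp only [blocks, if_neg h', if_neg hs]
    exact Nat.add_le_add_right (changes_sublist h) 1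

lemma sort_sublist {B A : Finset ℕ} (h : B ⊆ A) :
    List.Sublist (Finset.sort B (· ≤ ·)) (Finset.sort A (· ≤ ·)) := by
  apply List.sublist_of_subperm_of_pairwise _ (Finset.pairwise_sort _ _) (Finset.pairwise_sort _ _)
  apply List.subperm_of_subset (Finset.sort_nodup _ _)
  intro a ha
  rw [Finset.mem_sort] at ha ⊢
  exact h ha

lemma unstable_mono {f : ℕ → ℕ → Bool} {A B : Finset ℕ} {k : ℕ}
    (hA : AtMostUnstable f A k) (h : B ⊆ A) : AtMostUnstable f B k := by
  intro x hx
  refine le_trans ?_ (hA x (h hx))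
  apply blocks_mono
  apply List.Sublist.map
  exact sort_sublist (Finset.filter_subset_filter _ h)

lemma sort_union {B C : Finset ℕ} (hlt : ∀ b ∈ B, ∀ c ∈ C, b < c) :
    Finset.sort (B ∪ C) (· ≤ ·) = Finset.sort B (· ≤ ·) ++ Finset.sort C (· ≤ ·) := by
  have hd : Disjoint B C := by
    rw [Finset.disjoint_left]
    intro a haB haC
    exact absurd (hlt a haB a haC) (lt_irrefl a)
  apply (fun h1 h2 h3 => List.Perm.eq_of_pairwise' h2 h3 h1) ?_ (Finset.pairwise_sort _ _) ?_
  · rw [← Multiset.coe_eq_coe]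
    rw [← Finset.disjUnion_eq_union B C hd]
    simp [Finset.disjUnion, Finset.sort_eq, ← Multiset.coe_add]
  · rw [List.pairwise_append]
    refine ⟨Finset.pairwise_sort _ _, Finset.pairwise_sort _ _, ?_⟩
    intro b hb c hc
    rw [Finset.mem_sort] at hb hc
    exact (hlt b hb c hc).le

def seqc (f : ℕ → ℕ → Bool) (x : ℕ) (B : Finset ℕ) : List Bool :=
  (Finset.sort B (· ≤ ·)).map (f x)

lemma seqc_union {f : ℕ → ℕ → Bool} {x : ℕ} {B C : Finset ℕ}
    (hlt : ∀ b ∈ B, ∀ c ∈ C, b < c) :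
    seqc f x (B ∪ C) = seqc f x B ++ seqc f x C := by
  rw [seqc, sort_union hlt, List.map_append]; rfl

lemma changes_seqc_le {f : ℕ → ℕ → Bool} {k : ℕ} {A B : Finset ℕ} {x : ℕ}
    (hA : AtMostUnstable f A k) (hx : x ∈ A) (hBA : B ⊆ A)
    (hxB : ∀ y ∈ B, x < y) (hne : B.Nonempty) :
    changes (seqc f x B) + 1 ≤ k := by
  have hsub : insert x B ⊆ A := Finset.insert_subset hx hBA
  have h1 := unstable_mono hA hsub x (Finset.mem_insert_self x B)
  have hfil : (insert x B).filter (fun y => x < y) = B := by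
    ext y
    simp only [Finset.mem_filter, Finset.mem_insert]
    constructor
    · rintro ⟨hy1 | hy2, hy3⟩
      · omega
      · exact hy2
    · intro hy; exact ⟨Or.inr hy, hxB y hy⟩
  rw [seqAfter, hfil] at h1
  have hne' : seqc f x B ≠ [] := by
    rw [seqc, ← List.length_pos_iff, List.length_map, Finset.length_sort]
    exact Finset.card_pos.mpr hne
  have h2 : blocks (seqc f x B) ≤ k := h1
  rw [blocks, if_neg hne'] at h2
  exact h2

lemma chunk (A : Finset ℕ) (a : ℕ) (h : a ≤ A.card) :
    ∃ B C : Finset ℕ, B ∪ C = A ∧ B.card = a ∧ C.card = A.card - a ∧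
      ∀ x ∈ B, ∀ y ∈ C, x < y := by
  classical
  set l := Finset.sort A (· ≤ ·) with hl
  have hnd : l.Nodup := Finset.sort_nodup _ _
  have hlen : l.length = A.card := Finset.length_sort _
  have htd : l.take a ++ l.drop a = l := List.take_append_drop a l
  have hndd : (l.drop a).Nodup := List.Sublist.nodup (List.drop_sublist a l) hnd
  refine ⟨(l.take a).toFinset, (l.drop a).toFinset, ?_, ?_, ?_, ?_⟩
  · rw [← List.toFinset_append, htd, hl, Finset.sort_toFinset]
  · rw [List.toFinset_card_of_nodup (List.Sublist.nodup (List.take_sublist a l) hnd)]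
    rw [List.length_take]; omega
  · rw [List.toFinset_card_of_nodup hndd, List.length_drop]; omega
  · intro x hx y hy
    rw [List.mem_toFinset] at hx hy
    have hsorted : l.Pairwise (· < ·) := (Finset.sortedLT_sort A).pairwise
    rw [← htd, List.pairwise_append] at hsorted
    exact hsorted.2.2 x hx y hy

lemma multichunk : ∀ (N : ℕ) (A : Finset ℕ) (m₀ : ℕ), N * m₀ ≤ A.card →
    ∃ I : ℕ → Finset ℕ, (∀ j, j < N → I j ⊆ A ∧ (I j).card = m₀) ∧
      (∀ j j', j < j' → j' < N → ∀ x ∈ I j, ∀ y ∈ I j', x < y) := by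
  intro N
  induction N with
  | zero =>
    intro A m₀ _
    exact ⟨fun _ => ∅, fun j hj => absurd hj (Nat.not_lt_zero j), fun j j' _ hj' => absurd hj' (Nat.not_lt_zero j')⟩
  | succ N ih =>
    intro A m₀ h
    obtain ⟨B, C, hBC, hcardB, hcardC, hlt⟩ := chunk A m₀ (by rw [Nat.succ_mul] at h; omega)
    have hC : N * m₀ ≤ C.card := by rw [hcardC, Nat.succ_mul] at *; omega
    obtain ⟨I', hI'1, hI'2⟩ := ih C m₀ hC
    refine ⟨fun j => if j = 0 then B else I' (j - 1), ?_, ?_⟩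
    · intro j hj
      by_cases hj0 : j = 0
      · simp only [hj0, if_pos rfl]
        exact ⟨hBC ▸ Finset.subset_union_left, hcardB⟩
      · simp only [if_neg hj0]
        have := hI'1 (j - 1) (by omega)
        exact ⟨this.1.trans (hBC ▸ Finset.subset_union_right), this.2⟩
    · intro j j' hjj' hj' x hx y hy
      have hj'0 : j' ≠ 0 := by omega
      simp only [if_neg hj'0] at hy
      by_cases hj0 : j = 0
      · simp only [hj0, if_pos rfl] at hx
        exact hlt x hx y ((hI'1 (j' - 1) (by omega)).1 hy)
      · simp only [if_neg hj0] at hx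
        exact hI'2 (j - 1) (j' - 1) (by omega) (by omega) x hx y hy

lemma changes_biUnion_le (f : ℕ → ℕ → Bool) (x : ℕ) (I : ℕ → Finset ℕ)
    (hord : ∀ j j', j < j' → ∀ a ∈ I j, ∀ b ∈ I j', a < b) :
    ∀ (n lo : ℕ), (∑ j ∈ Finset.Icc lo (lo + n), changes (seqc f x (I j))) ≤
      changes (seqc f x ((Finset.Icc lo (lo + n)).biUnion I)) := by
  intro n
  induction n with
  | zero =>
    intro lo
    simp only [Nat.add_zero, Finset.Icc_self, Finset.sum_singleton, Finset.singleton_biUnion]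
    exact le_refl _
  | succ n ih =>
    intro lo
    have hmem : lo + (n + 1) ∉ Finset.Icc lo (lo + n) := by
      simp [Finset.mem_Icc]
    have hIcc : Finset.Icc lo (lo + (n + 1)) = insert (lo + (n + 1)) (Finset.Icc lo (lo + n)) := by
      rw [← Nat.add_assoc]
      exact (Finset.insert_Icc_right_eq_Icc_add_one (by omega)).symm
    rw [hIcc, Finset.sum_insert hmem, Finset.biUnion_insert]
    have hlt : ∀ a ∈ (Finset.Icc lo (lo + n)).biUnion I, ∀ b ∈ I (lo + (n + 1)), a < b := by
      intro a ha b hb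
      rw [Finset.mem_biUnion] at ha
      obtain ⟨j, hj, haj⟩ := ha
      rw [Finset.mem_Icc] at hj
      exact hord j (lo + (n + 1)) (by omega) a haj b hb
    have hcomm : I (lo + (n + 1)) ∪ (Finset.Icc lo (lo + n)).biUnion I
        = (Finset.Icc lo (lo + n)).biUnion I ∪ I (lo + (n + 1)) := Finset.union_comm _ _
    rw [hcomm, seqc_union hlt]
    calc changes (seqc f x (I (lo + (n + 1)))) + ∑ j ∈ Finset.Icc lo (lo + n), changes (seqc f x (I j))
        ≤ changes (seqc f x (I (lo + (n + 1)))) + changes (seqc f x ((Finset.Icc lo (lo + n)).biUnion I)) := by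
          exact Nat.add_le_add_left (ih lo) _
      _ ≤ changes (seqc f x ((Finset.Icc lo (lo + n)).biUnion I) ++ seqc f x (I (lo + (n + 1)))) := by
          rw [Nat.add_comm]; exact changes_append _ _

open Finset in
lemma step_count {f : ℕ → ℕ → Bool} {k : ℕ} {A : Finset ℕ} (hA : AtMostUnstable f A k)
    (hk : 1 ≤ k) (I : ℕ → Finset ℕ) (m₀ : ℕ) (hm₀ : 1 ≤ m₀)
    (hI : ∀ j, j < 2*k+1 → I j ⊆ A ∧ (I j).card = m₀)
    (hord : ∀ j j', j < j' → j' < 2*k+1 → ∀ a ∈ I j, ∀ b ∈ I j', a < b)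
    {x : ℕ} (hx : x ∈ I 0) :
    k + 1 ≤ ((Finset.Icc 1 (2*k) ×ˢ (Finset.univ : Finset Bool)).filter
      (fun p => ∀ y ∈ I p.1, f x y = p.2)).card := by
  classical
  have hxA : x ∈ A := (hI 0 (by omega)).1 hx
  set Itld : ℕ → Finset ℕ := fun j => if j < 2*k+1 then I j else ∅ with hItld
  have hordt : ∀ j j', j < j' → ∀ a ∈ Itld j, ∀ b ∈ Itld j', a < b := by
    intro j j' hjj' a ha b hb
    simp only [hItld] at ha hb
    split_ifs at ha hb with h1 h2
    · exact hord j j' hjj' h2 a ha b hb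
    · exact absurd hb (Finset.notMem_empty b)
    · exact absurd ha (Finset.notMem_empty a)
    · exact absurd ha (Finset.notMem_empty a)
  have hIeq : ∀ j ∈ Finset.Icc 1 (2*k), Itld j = I j := by
    intro j hj
    rw [Finset.mem_Icc] at hj
    simp only [hItld, if_pos (by omega : j < 2*k+1)]
  set U : Finset ℕ := (Finset.Icc 1 (2*k)).biUnion I with hU
  have hUsub : U ⊆ A := by
    intro y hy
    rw [hU, Finset.mem_biUnion] at hy
    obtain ⟨j, hj, hyj⟩ := hy
    rw [Finset.mem_Icc] at hj
    exact (hI j (by omega)).1 hyj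
  have hxU : ∀ y ∈ U, x < y := by
    intro y hy
    rw [hU, Finset.mem_biUnion] at hy
    obtain ⟨j, hj, hyj⟩ := hy
    rw [Finset.mem_Icc] at hj
    exact hord 0 j (by omega) (by omega) x hx y hyj
  have hUne : U.Nonempty := by
    have h1 : (I 1).Nonempty := Finset.card_pos.mp (by rw [(hI 1 (by omega)).2]; omega)
    obtain ⟨y, hy⟩ := h1
    exact ⟨y, Finset.mem_biUnion.mpr ⟨1, Finset.mem_Icc.mpr ⟨le_refl 1, by omega⟩, hy⟩⟩
  have hch : changes (seqc f x U) + 1 ≤ k := changes_seqc_le hA hxA hUsub hxU hUne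
  -- sum of changes over the intervals is at most k - 1
  have hsum : (∑ j ∈ Finset.Icc 1 (2*k), changes (seqc f x (I j))) + 1 ≤ k := by
    have h1 := changes_biUnion_le f x Itld hordt (2*k - 1) 1
    have he : 1 + (2*k - 1) = 2*k := by omega
    rw [he] at h1
    have h2 : (Finset.Icc 1 (2*k)).biUnion Itld = U := Finset.biUnion_congr rfl hIeq
    have h3 : ∑ j ∈ Finset.Icc 1 (2*k), changes (seqc f x (Itld j))
        = ∑ j ∈ Finset.Icc 1 (2*k), changes (seqc f x (I j)) :=
      Finset.sum_congr rfl (fun j hj => by rw [hIeq j hj])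
    rw [h2, h3] at h1
    omega
  set G : Finset ℕ := (Finset.Icc 1 (2*k)).filter
    (fun j => ∀ y ∈ I j, ∀ y' ∈ I j, f x y = f x y') with hG
  have hbad : (Finset.Icc 1 (2*k) \ G).card
      ≤ ∑ j ∈ Finset.Icc 1 (2*k), changes (seqc f x (I j)) := by
    set s := Finset.Icc 1 (2*k) \ G with hs
    calc s.card = ∑ _j ∈ s, 1 := by rw [Finset.sum_const, Nat.smul_one_eq_cast]; simp
      _ ≤ ∑ j ∈ s, changes (seqc f x (I j)) := by
          apply Finset.sum_le_sum
          intro j hj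
          rw [hs, Finset.mem_sdiff] at hj
          by_contra hc
          have hc0 : changes (seqc f x (I j)) = 0 := by omega
          apply hj.2
          rw [hG, Finset.mem_filter]
          refine ⟨hj.1, ?_⟩
          intro y hy y' hy'
          exact const_of_changes_zero hc0 (f x y)
            (List.mem_map_of_mem ((Finset.mem_sort _).mpr hy)) (f x y')
            (List.mem_map_of_mem ((Finset.mem_sort _).mpr hy'))
      _ ≤ ∑ j ∈ Finset.Icc 1 (2*k), changes (seqc f x (I j)) := by
          apply Finset.sum_le_sum_of_subset
          rw [hs]; exact Finset.sdiff_subset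
  have hGcard : k + 1 ≤ G.card := by
    have hGsub : G ⊆ Finset.Icc 1 (2*k) := by rw [hG]; exact Finset.filter_subset _ _
    have hsd := Finset.card_sdiff_of_subset hGsub
    have hGle := Finset.card_le_card hGsub
    have hIcc : (Finset.Icc 1 (2*k)).card = 2*k := by rw [Nat.card_Icc]; omega
    omega
  -- inject G into the set of good pairs
  set w : ℕ → ℕ := fun j => if h : (I j).Nonempty then h.choose else 0 with hw
  have hwmem : ∀ j, j < 2*k+1 → w j ∈ I j := by
    intro j hj
    have hne : (I j).Nonempty := Finset.card_pos.mp (by rw [(hI j hj).2]; omega)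
    simp only [hw, dif_pos hne]
    exact hne.choose_spec
  apply le_trans hGcard
  apply Finset.card_le_card_of_injOn (fun j => (j, f x (w j)))
  · intro j hj
    rw [Finset.mem_coe, hG, Finset.mem_filter] at hj
    rw [Finset.mem_coe, Finset.mem_filter]
    constructor
    · exact Finset.mem_product.mpr ⟨hj.1, Finset.mem_univ _⟩
    · intro y hy
      have hj2k : j < 2*k+1 := by
        have := Finset.mem_Icc.mp hj.1; omega
      exact hj.2 y hy (w j) (hwmem j hj2k)
  · intro j₁ _ j₂ _ he
    exact congrArg Prod.fst he

lemma homog_subset {f : ℕ → ℕ → Bool} {H H' : Finset ℕ} {b : Bool}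
    (h : HomogOf f H b) (hsub : H' ⊆ H) : HomogOf f H' b :=
  fun x hx y hy hxy => h x (hsub hx) y (hsub hy) hxy

lemma glue {f : ℕ → ℕ → Bool} {b : Bool} {E F X J : Finset ℕ}
    (hE : E ⊆ X) (hF : F ⊆ J) (hXJ : ∀ a ∈ X, ∀ c ∈ J, a < c)
    (hEb : HomogOf f E b) (hFb : HomogOf f F b)
    (hcross : ∀ x ∈ X, ∀ y ∈ J, f x y = b) :
    HomogOf f (E ∪ F) b ∧ (E ∪ F).card = E.card + F.card := by
  have hdisj : Disjoint E F := by
    rw [Finset.disjoint_left]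
    intro a haE haF
    exact absurd (hXJ a (hE haE) a (hF haF)) (lt_irrefl a)
  constructor
  · intro x hx y hy hxy
    rcases Finset.mem_union.mp hx with hxE | hxF
    · rcases Finset.mem_union.mp hy with hyE | hyF
      · exact hEb x hxE y hyE hxy
      · exact hcross x (hE hxE) y (hF hyF)
    · rcases Finset.mem_union.mp hy with hyE | hyF
      · exact absurd (hXJ y (hE hyE) x (hF hxF)) (by omega)
      · exact hFb x hxF y hyF hxy
  · exact Finset.card_union_of_disjoint hdisj

lemma prod2 {P a b c d : ℕ} (h1 : P ≤ a*b) (h2 : P ≤ c*d) (hbd : b ≤ d) :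
    P * 2 ≤ (a + c) * d := by
  calc P*2 = P + P := by ring
    _ ≤ a*b + c*d := Nat.add_le_add h1 h2
    _ ≤ a*d + c*d := Nat.add_le_add_right (Nat.mul_le_mul_left a hbd) _
    _ = (a+c)*d := by ring

lemma prod2' {P a b c d : ℕ} (h1 : P ≤ a*b) (h2 : P ≤ c*d) (hac : a ≤ c) :
    P * 2 ≤ c * (b + d) := by
  calc P*2 = P + P := by ring
    _ ≤ a*b + c*d := Nat.add_le_add h1 h2
    _ ≤ c*b + c*d := Nat.add_le_add_right (Nat.mul_le_mul_right b hac) _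
    _ = c*(b+d) := by ring

lemma mainlemma (k : ℕ) (hk : 1 ≤ k) :
    ∀ (n : ℕ) (f : ℕ → ℕ → Bool) (A : Finset ℕ), AtMostUnstable f A k →
      (16*k)^n ≤ A.card →
    ∃ H₀ H₁ : Finset ℕ, H₀ ⊆ A ∧ H₁ ⊆ A ∧ HomogOf f H₀ false ∧ HomogOf f H₁ true ∧
      2^n ≤ H₀.card * H₁.card := by
  intro n
  induction n with
  | zero =>
    intro f A _ hcard
    simp only [pow_zero] at hcard
    obtain ⟨a, ha⟩ := Finset.card_pos.mp hcard
    refine ⟨{a}, {a}, Finset.singleton_subset_iff.mpr ha, Finset.singleton_subset_iff.mpr ha, ?_, ?_, ?_⟩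
    · intro x hx y hy hxy
      rw [Finset.mem_singleton] at hx hy
      omega
    · intro x hx y hy hxy
      rw [Finset.mem_singleton] at hx hy
      omega
    · simp
  | succ n ih =>
    intro f A hA hcard
    classical
    set m₀ := 4 * (16*k)^n with hm₀def
    have hP1 : 1 ≤ (16*k)^n := Nat.one_le_pow _ _ (by omega)
    have hm₀ : 1 ≤ m₀ := by omega
    have hchunks : (2*k+1) * m₀ ≤ A.card := by
      refine le_trans ?_ hcard
      rw [pow_succ, hm₀def]
      calc (2*k+1) * (4 * (16*k)^n) = (8*k+4) * (16*k)^n := by ring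
        _ ≤ (16*k) * (16*k)^n := Nat.mul_le_mul_right _ (by omega)
        _ = (16*k)^n * (16*k) := by ring
    obtain ⟨I, hI, hord⟩ := multichunk (2*k+1) A m₀ hchunks
    set T : Finset (ℕ × Bool) := Finset.Icc 1 (2*k) ×ˢ (Finset.univ : Finset Bool) with hT
    -- double counting
    have hcnt : ∀ x ∈ I 0, k + 1 ≤ (T.filter (fun p => ∀ y ∈ I p.1, f x y = p.2)).card :=
      fun x hx => step_count hA hk I m₀ hm₀ hI hord hx
    have hdouble : (k+1) * m₀ ≤ ∑ p ∈ T, ((I 0).filter (fun x => ∀ y ∈ I p.1, f x y = p.2)).card := by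
      have h1 : ∑ p ∈ T, ((I 0).filter (fun x => ∀ y ∈ I p.1, f x y = p.2)).card
          = ∑ x ∈ I 0, (T.filter (fun p => ∀ y ∈ I p.1, f x y = p.2)).card := by
        simp only [Finset.card_filter]
        rw [Finset.sum_comm]
      rw [h1]
      calc (k+1) * m₀ = ∑ _x ∈ I 0, (k+1) := by
            rw [Finset.sum_const, (hI 0 (by omega)).2, smul_eq_mul, Nat.mul_comm]
        _ ≤ _ := Finset.sum_le_sum (fun x hx => hcnt x hx)
    have hTcard : T.card = 4 * k := by
      rw [hT, Finset.card_product, Nat.card_Icc, Finset.card_univ, Fintype.card_bool]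
      omega
    have hex : ∃ p ∈ T, (16*k)^n ≤ ((I 0).filter (fun x => ∀ y ∈ I p.1, f x y = p.2)).card := by
      by_contra hc
      push_neg at hc
      have hTne : T.Nonempty := ⟨(1, false), by
        rw [hT, Finset.mem_product, Finset.mem_Icc]
        exact ⟨⟨le_refl 1, by omega⟩, Finset.mem_univ _⟩⟩
      have hlt : ∑ p ∈ T, ((I 0).filter (fun x => ∀ y ∈ I p.1, f x y = p.2)).card
          < ∑ _p ∈ T, (16*k)^n :=
        Finset.sum_lt_sum_of_nonempty hTne (fun p hp => hc p hp)
      rw [Finset.sum_const, smul_eq_mul, hTcard] at hlt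
      have : (k+1) * m₀ = (4*k+4) * (16*k)^n := by rw [hm₀def]; ring
      nlinarith [hdouble]
    obtain ⟨p, hpT, hpcard⟩ := hex
    obtain ⟨j, b⟩ := p
    rw [hT, Finset.mem_product, Finset.mem_Icc] at hpT
    have hj1 : 1 ≤ j := hpT.1.1
    have hj2 : j < 2*k+1 := by have := hpT.1.2; omega
    set X : Finset ℕ := (I 0).filter (fun x => ∀ y ∈ I j, f x y = b) with hX
    have hXsub : X ⊆ I 0 := Finset.filter_subset _ _
    have hXA : X ⊆ A := hXsub.trans (hI 0 (by omega)).1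
    have hJA : I j ⊆ A := (hI j hj2).1
    have hXJ : ∀ a ∈ X, ∀ c ∈ I j, a < c :=
      fun a ha c hc => hord 0 j (by omega) hj2 a (hXsub ha) c hc
    have hcross : ∀ x ∈ X, ∀ y ∈ I j, f x y = b := by
      intro x hx y hy
      rw [hX, Finset.mem_filter] at hx
      exact hx.2 y hy
    obtain ⟨E₀, E₁, hE₀X, hE₁X, hE₀h, hE₁h, hEprod⟩ :=
      ih f X (unstable_mono hA hXA) hpcard
    obtain ⟨F₀, F₁, hF₀J, hF₁J, hF₀h, hF₁h, hFprod⟩ :=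
      ih f (I j) (unstable_mono hA hJA) (by rw [(hI j hj2).2, hm₀def]; omega)
    cases b with
    | false =>
      obtain ⟨hH₀h, hH₀c⟩ := glue hE₀X hF₀J hXJ hE₀h hF₀h hcross
      by_cases hcmp : E₁.card ≤ F₁.card
      · refine ⟨E₀ ∪ F₀, F₁, Finset.union_subset (hE₀X.trans hXA) (hF₀J.trans hJA),
          hF₁J.trans hJA, hH₀h, hF₁h, ?_⟩
        rw [hH₀c, pow_succ]
        exact prod2 hEprod hFprod hcmp
      · refine ⟨E₀ ∪ F₀, E₁, Finset.union_subset (hE₀X.trans hXA) (hF₀J.trans hJA),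
          hE₁X.trans hXA, hH₀h, hE₁h, ?_⟩
        rw [hH₀c, pow_succ, Nat.add_comm E₀.card F₀.card]
        exact prod2 hFprod hEprod (by omega)
    | true =>
      obtain ⟨hH₁h, hH₁c⟩ := glue hE₁X hF₁J hXJ hE₁h hF₁h hcross
      by_cases hcmp : E₀.card ≤ F₀.card
      · refine ⟨F₀, E₁ ∪ F₁, hF₀J.trans hJA,
          Finset.union_subset (hE₁X.trans hXA) (hF₁J.trans hJA), hF₀h, hH₁h, ?_⟩
        rw [hH₁c, pow_succ]
        exact prod2' hEprod hFprod hcmp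
      · refine ⟨E₀, E₁ ∪ F₁, hE₀X.trans hXA,
          Finset.union_subset (hE₁X.trans hXA) (hF₁J.trans hJA), hE₀h, hH₁h, ?_⟩
        rw [hH₁c, pow_succ, Nat.add_comm E₁.card F₁.card]
        exact prod2' hFprod hEprod (by omega)

theorem stmt7 : ∃ C : ℕ, ∀ k : ℕ, C ≤ k →
    ∀ f : ℕ → ℕ → Bool,
      AtMostUnstable f (Finset.range (k ^ (4 * Nat.clog 2 k))) k →
      ∃ H ⊆ Finset.range (k ^ (4 * Nat.clog 2 k)), Homogeneous f H ∧ H.card = k := by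
  refine ⟨16, ?_⟩
  intro k hk f hf
  set L := Nat.clog 2 k with hL
  have hk1 : 1 ≤ k := by omega
  have hcard : (16*k)^(2*L) ≤ (Finset.range (k ^ (4*L))).card := by
    rw [Finset.card_range]
    calc (16*k)^(2*L) = 16^(2*L) * k^(2*L) := by rw [mul_pow]
      _ ≤ k^(2*L) * k^(2*L) := Nat.mul_le_mul_right _ (Nat.pow_le_pow_left (by omega) _)
      _ = k^(4*L) := by rw [← pow_add]; congr 1; omega
  obtain ⟨H₀, H₁, hs₀, hs₁, hh₀, hh₁, hprod⟩ := mainlemma k hk1 (2*L) f _ hf hcard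
  have hk2L : k*k ≤ 2^(2*L) := by
    have h1 : k ≤ 2^L := Nat.le_pow_clog (by norm_num) k
    calc k*k ≤ 2^L * 2^L := Nat.mul_le_mul h1 h1
      _ = 2^(2*L) := by rw [← pow_add]; congr 1; omega
  have hmax : k ≤ H₀.card ∨ k ≤ H₁.card := by
    by_contra hc
    push_neg at hc
    nlinarith [hprod, hc.1, hc.2, hk2L]
  rcases hmax with h | h
  · obtain ⟨H, hHsub, hHcard⟩ := Finset.exists_subset_card_eq h
    exact ⟨H, hHsub.trans hs₀, ⟨false, homog_subset hh₀ hHsub⟩, hHcard⟩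
  · obtain ⟨H, hHsub, hHcard⟩ := Finset.exists_subset_card_eq h
    exact ⟨H, hHsub.trans hs₁, ⟨true, homog_subset hh₁ hHsub⟩, hHcard⟩
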